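/- Let K be a compact metric space equipped with its Borel σ-algebra, and let k : K × K → ℝ be a continuous symmetric positive semidefinite kernel that is characteristic. Let (Y, ℬ) be a measurable space, Q a probability measure on Y, and let κ and κ* be Markov kernels from Y to K. Then ∫_Y ∫_K φ_k(κ*(x), y) d(κ*(x))(y) dQ(x) ≤ ∫_Y ∫_K φ_k(κ(x), y) d(κ*(x))(y) dQ(x), and equality holds if and only if κ(x) = κ*(x) for Q-almost every x ∈ Y. -/

import Mathlib

open MeasureTheory ProbabilityTheory

/-- The kernel score `φ_k(P, y) = ∫∫ k(x,x') dP dP − 2 ∫ k(x,y) dP`. -/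
noncomputable def kernelScore {K : Type*} [MeasurableSpace K] (k : K → K → ℝ)
    (P : Measure K) (y : K) : ℝ :=
  (∫ x, (∫ x', k x x' ∂P) ∂P) - 2 * ∫ x, k x y ∂P

/-- The squared maximum mean discrepancy
`D_k(P,Q)² = ∫∫ k dP⊗P − 2 ∫∫ k dP⊗Q + ∫∫ k dQ⊗Q`. -/
noncomputable def mmdSq {K : Type*} [MeasurableSpace K] (k : K → K → ℝ)
    (P Q : Measure K) : ℝ :=
  (∫ x, (∫ x', k x x' ∂P) ∂P) - 2 * (∫ x, (∫ y, k x y ∂Q) ∂P)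
    + (∫ x, (∫ x', k x x' ∂Q) ∂Q)

open Set Metric
section helpers

lemma cont_integrable {X : Type*} [MetricSpace X] [CompactSpace X] [MeasurableSpace X]
    [BorelSpace X] {f : X → ℝ} (hf : Continuous f) (μ : Measure X) [IsFiniteMeasure μ] :
    Integrable f μ := by
  have h := hf.continuousOn.integrableOn_compact (isCompact_univ (X := X)) (μ := μ)
  rwa [integrableOn_univ] at h

variable {K : Type*} [MetricSpace K] [CompactSpace K] [MeasurableSpace K] [BorelSpace K]

lemma sum_toReal_partition {n : ℕ} (A : Fin n → Set K)
    (hAmeas : ∀ i, MeasurableSet (A i)) (hdisj : Pairwise (Function.onFun Disjoint A))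
    (hcover : ⋃ i, A i = univ) (P : Measure K) [IsProbabilityMeasure P] :
    ∑ i, (P (A i)).toReal = 1 := by
  have h := measure_iUnion (μ := P) hdisj hAmeas
  rw [hcover, measure_univ, tsum_fintype] at h
  have : (∑ i, P (A i)).toReal = 1 := by rw [← h]; simp
  rwa [ENNReal.toReal_sum (fun i _ => measure_ne_top P _)] at this

lemma double_integral_approx (k : K → K → ℝ)
    (hk_cont : Continuous fun p : K × K => k p.1 p.2)
    {n : ℕ} (A : Fin n → Set K) (y : Fin n → K)
    (hAmeas : ∀ i, MeasurableSet (A i)) (hdisj : Pairwise (Function.onFun Disjoint A))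
    (hcover : ⋃ i, A i = univ) {ε : ℝ} (hε : 0 ≤ ε)
    (hclose : ∀ i j, ∀ x ∈ A i, ∀ z ∈ A j, |k x z - k (y i) (y j)| ≤ ε)
    (P P' : Measure K) [IsProbabilityMeasure P] [IsProbabilityMeasure P'] :
    |(∫ x, (∫ z, k x z ∂P') ∂P)
        - ∑ i, ∑ j, (P (A i)).toReal * (P' (A j)).toReal * k (y i) (y j)| ≤ ε := by
  set μ := P.prod P' with hμ
  have hf_int : Integrable (fun p : K × K => k p.1 p.2) μ := cont_integrable hk_cont μ
  have h1 : (∫ x, (∫ z, k x z ∂P') ∂P) = ∫ p, k p.1 p.2 ∂μ :=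
    (integral_prod _ hf_int).symm
  -- partition of K × K
  set S : Fin n × Fin n → Set (K × K) := fun p => A p.1 ×ˢ A p.2 with hS
  have hSmeas : ∀ p, MeasurableSet (S p) := fun p => (hAmeas p.1).prod (hAmeas p.2)
  have hSdisj : Pairwise (Function.onFun Disjoint S) := by
    intro p q hpq
    by_cases h1 : p.1 = q.1
    · have h2 : p.2 ≠ q.2 := fun h2 => hpq (Prod.ext h1 h2)
      exact Set.Disjoint.set_prod_right (hdisj h2) _ _
    · exact Set.Disjoint.set_prod_left (hdisj h1) _ _
  have hScover : ⋃ p, S p = univ := by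
    apply eq_univ_of_forall
    intro q
    have hq1 := hcover ▸ mem_univ q.1
    have hq2 := hcover ▸ mem_univ q.2
    rcases mem_iUnion.1 hq1 with ⟨i, hi⟩
    rcases mem_iUnion.1 hq2 with ⟨j, hj⟩
    exact mem_iUnion.2 ⟨(i, j), ⟨hi, hj⟩⟩
  -- decompose the integral along the partition
  have hint_piece : ∀ p : Fin n × Fin n, IntegrableOn (fun p : K × K => k p.1 p.2) (S p) μ :=
    fun p => hf_int.integrableOn
  have hdecomp : ∫ p, k p.1 p.2 ∂μ = ∑ p : Fin n × Fin n, ∫ q in S p, k q.1 q.2 ∂μ := by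
    rw [← integral_iUnion_fintype hSmeas hSdisj hint_piece, hScover,
      Measure.restrict_univ]
  -- each piece is close to the discretized value
  have hpiece : ∀ p : Fin n × Fin n,
      |(∫ q in S p, k q.1 q.2 ∂μ) - (P (A p.1)).toReal * (P' (A p.2)).toReal * k (y p.1) (y p.2)|
        ≤ ε * ((P (A p.1)).toReal * (P' (A p.2)).toReal) := by
    intro p
    have hμS : μ (S p) = P (A p.1) * P' (A p.2) := Measure.prod_prod _ _
    have hμS_lt : μ (S p) < ⊤ := hμS ▸ ENNReal.mul_lt_top (measure_lt_top _ _) (measure_lt_top _ _)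
    have hμSr : (μ (S p)).toReal = (P (A p.1)).toReal * (P' (A p.2)).toReal := by
      rw [hμS, ENNReal.toReal_mul]
    have hsub : ∫ q in S p, (k q.1 q.2 - k (y p.1) (y p.2)) ∂μ
        = (∫ q in S p, k q.1 q.2 ∂μ) - (P (A p.1)).toReal * (P' (A p.2)).toReal * k (y p.1) (y p.2) := by
      rw [integral_sub (hint_piece p) (integrableOn_const hμS_lt.ne),
        setIntegral_const, measureReal_def, hμSr, smul_eq_mul]
    rw [← hsub]
    calc ‖∫ q in S p, (k q.1 q.2 - k (y p.1) (y p.2)) ∂μ‖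
        ≤ ε * (μ (S p)).toReal := by
          apply norm_setIntegral_le_of_norm_le_const hμS_lt
          · rintro ⟨a, b⟩ ⟨ha, hb⟩
            simpa [Real.norm_eq_abs] using hclose p.1 p.2 a ha b hb
      _ = ε * ((P (A p.1)).toReal * (P' (A p.2)).toReal) := by rw [hμSr]
  -- combine
  rw [h1, hdecomp]
  have hsum_eq : ∑ i, ∑ j, (P (A i)).toReal * (P' (A j)).toReal * k (y i) (y j)
      = ∑ p : Fin n × Fin n, (P (A p.1)).toReal * (P' (A p.2)).toReal * k (y p.1) (y p.2) :=
    (Fintype.sum_prod_type fun p : Fin n × Fin n => (P (A p.1)).toReal * (P' (A p.2)).toReal * k (y p.1) (y p.2)).symm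
  rw [hsum_eq, ← Finset.sum_sub_distrib]
  calc |∑ p : Fin n × Fin n, ((∫ q in S p, k q.1 q.2 ∂μ)
          - (P (A p.1)).toReal * (P' (A p.2)).toReal * k (y p.1) (y p.2))|
      ≤ ∑ p : Fin n × Fin n, |(∫ q in S p, k q.1 q.2 ∂μ)
          - (P (A p.1)).toReal * (P' (A p.2)).toReal * k (y p.1) (y p.2)| :=
        Finset.abs_sum_le_sum_abs _ _
    _ ≤ ∑ p : Fin n × Fin n, ε * ((P (A p.1)).toReal * (P' (A p.2)).toReal) :=
        Finset.sum_le_sum fun p _ => hpiece p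
    _ = ε := by
        rw [← Finset.mul_sum]
        have : ∑ p : Fin n × Fin n, (P (A p.1)).toReal * (P' (A p.2)).toReal
            = (∑ i, (P (A i)).toReal) * (∑ j, (P' (A j)).toReal) := by
          rw [Finset.sum_mul_sum]
          exact Fintype.sum_prod_type fun p : Fin n × Fin n => (P (A p.1)).toReal * (P' (A p.2)).toReal
        rw [this, sum_toReal_partition A hAmeas hdisj hcover P,
          sum_toReal_partition A hAmeas hdisj hcover P', one_mul, mul_one]

/-- Existence of a fine measurable partition of a compact metric space. -/
lemma exists_fine_partition (δ : ℝ) (hδ : 0 < δ) :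
    ∃ (n : ℕ) (A : Fin n → Set K) (y : Fin n → K),
      (∀ i, MeasurableSet (A i)) ∧ Pairwise (Function.onFun Disjoint A) ∧ (⋃ i, A i = univ) ∧
      ∀ i, A i ⊆ ball (y i) δ := by
  classical
  obtain ⟨t, ht⟩ := isCompact_univ.elim_finite_subcover (fun z : K => ball z δ)
    (fun z => isOpen_ball) (fun x _ => mem_iUnion.2 ⟨x, mem_ball_self hδ⟩)
  refine ⟨t.card, ?_⟩
  set y : Fin t.card → K := fun i => (t.equivFin.symm i : K) with hy
  set A : Fin t.card → Set K :=
    fun i => ball (y i) δ \ ⋃ (j : Fin t.card) (_ : j < i), ball (y j) δ with hA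
  refine ⟨A, y, fun i => measurableSet_ball.diff
      (MeasurableSet.iUnion fun j => MeasurableSet.iUnion fun _ => measurableSet_ball),
    ?_, ?_, fun i => diff_subset⟩
  · intro i j hij
    rcases lt_or_gt_of_ne hij with h | h
    · exact Set.disjoint_left.2 fun x hxi hxj =>
        hxj.2 (mem_iUnion.2 ⟨i, mem_iUnion.2 ⟨h, hxi.1⟩⟩)
    · exact Set.disjoint_left.2 fun x hxi hxj =>
        hxi.2 (mem_iUnion.2 ⟨j, mem_iUnion.2 ⟨h, hxj.1⟩⟩)
  · apply eq_univ_of_forall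
    intro x
    have hx : ∃ i : Fin t.card, x ∈ ball (y i) δ := by
      rcases mem_iUnion₂.1 (ht (mem_univ x)) with ⟨z, hz, hxz⟩
      exact ⟨t.equivFin ⟨z, hz⟩, by simpa [hy, Equiv.symm_apply_apply] using hxz⟩
    set s := Finset.univ.filter (fun i : Fin t.card => x ∈ ball (y i) δ) with hs
    have hsne : s.Nonempty := ⟨hx.choose, by simp only [hs, Finset.mem_filter]; exact ⟨Finset.mem_univ _, hx.choose_spec⟩⟩
    refine mem_iUnion.2 ⟨s.min' hsne, ⟨?_, ?_⟩⟩
    · have := s.min'_mem hsne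
      simp only [hs, Finset.mem_filter] at this
      exact this.2
    · intro hmem
      rcases mem_iUnion.1 hmem with ⟨j, hj⟩
      rcases mem_iUnion.1 hj with ⟨hji, hxj⟩
      exact absurd hji (not_lt.2 (s.min'_le j (by simp only [hs, Finset.mem_filter]; exact ⟨Finset.mem_univ _, hxj⟩)))

lemma mmdSq_nonneg (k : K → K → ℝ)
    (hk_cont : Continuous fun p : K × K => k p.1 p.2)
    (hk_symm : ∀ x y, k x y = k y x)
    (hk_psd : ∀ (n : ℕ) (x : Fin n → K) (c : Fin n → ℝ),
      0 ≤ ∑ i, ∑ j, c i * c j * k (x i) (x j))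
    (P Q : Measure K) [IsProbabilityMeasure P] [IsProbabilityMeasure Q] :
    0 ≤ mmdSq k P Q := by
  apply le_of_forall_pos_le_add
  intro ε hε
  -- uniform continuity
  have huc : UniformContinuous fun p : K × K => k p.1 p.2 :=
    CompactSpace.uniformContinuous_of_continuous hk_cont
  obtain ⟨δ, hδ, hδ'⟩ := Metric.uniformContinuous_iff.1 huc (ε / 4) (by linarith)
  obtain ⟨n, A, y, hAmeas, hdisj, hcover, hAball⟩ := exists_fine_partition (K := K) (δ / 2) (by linarith)
  have hclose : ∀ i j, ∀ x ∈ A i, ∀ z ∈ A j, |k x z - k (y i) (y j)| ≤ ε / 4 := by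
    intro i j x hx z hz
    have hd : dist (x, z) (y i, y j) < δ := by
      rw [Prod.dist_eq]
      exact max_lt (lt_of_lt_of_le (hAball i hx) (by linarith))
        (lt_of_lt_of_le (hAball j hz) (by linarith))
    have := hδ' hd
    rw [Real.dist_eq] at this
    exact le_of_lt this
  have hε4 : (0:ℝ) ≤ ε / 4 := by linarith
  have hPP := double_integral_approx k hk_cont A y hAmeas hdisj hcover hε4 hclose P P
  have hPQ := double_integral_approx k hk_cont A y hAmeas hdisj hcover hε4 hclose P Q
  have hQQ := double_integral_approx k hk_cont A y hAmeas hdisj hcover hε4 hclose Q Q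
  set p : Fin n → ℝ := fun i => (P (A i)).toReal with hp
  set q : Fin n → ℝ := fun i => (Q (A i)).toReal with hq
  have hpsd : 0 ≤ ∑ i, ∑ j, (p i - q i) * (p j - q j) * k (y i) (y j) := hk_psd n y _
  have hswap : ∑ i, ∑ j, q i * p j * k (y i) (y j)
      = ∑ i, ∑ j, p i * q j * k (y i) (y j) := by
    rw [Finset.sum_comm]
    exact Finset.sum_congr rfl fun i _ => Finset.sum_congr rfl fun j _ => by
      rw [hk_symm (y j) (y i)]; ring
  have hexpand : ∑ i, ∑ j, (p i - q i) * (p j - q j) * k (y i) (y j)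
      = (∑ i, ∑ j, p i * p j * k (y i) (y j))
        - (∑ i, ∑ j, p i * q j * k (y i) (y j))
        - (∑ i, ∑ j, q i * p j * k (y i) (y j))
        + (∑ i, ∑ j, q i * q j * k (y i) (y j)) := by
    simp only [← Finset.sum_sub_distrib, ← Finset.sum_add_distrib]
    exact Finset.sum_congr rfl fun i _ => Finset.sum_congr rfl fun j _ => by ring
  rw [hexpand, hswap] at hpsd
  rw [mmdSq]
  have h1 := abs_le.1 hPP
  have h2 := abs_le.1 hPQ
  have h3 := abs_le.1 hQQ
  linarith [h1.1, h1.2, h2.1, h2.2, h3.1, h3.2]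

lemma integral_k_continuous (k : K → K → ℝ)
    (hk_cont : Continuous fun p : K × K => k p.1 p.2)
    {C : ℝ} (hC : ∀ x z, |k x z| ≤ C) (P : Measure K) [IsProbabilityMeasure P] :
    Continuous fun y => ∫ x, k x y ∂P := by
  apply continuous_of_dominated (bound := fun _ : K => C)
  · intro y
    exact ((hk_cont.comp (continuous_id.prodMk continuous_const)).aestronglyMeasurable)
  · intro y
    exact Filter.Eventually.of_forall fun x => by simpa [Real.norm_eq_abs] using hC x y
  · exact integrable_const C
  · exact Filter.Eventually.of_forall fun x =>
      hk_cont.comp (continuous_const.prodMk continuous_id)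

lemma score_diff (k : K → K → ℝ)
    (hk_cont : Continuous fun p : K × K => k p.1 p.2)
    {C : ℝ} (hC : ∀ x z, |k x z| ≤ C)
    (P P' : Measure K) [IsProbabilityMeasure P] [IsProbabilityMeasure P'] :
    (∫ y, kernelScore k P y ∂P') - (∫ y, kernelScore k P' y ∂P') = mmdSq k P P' := by
  have hswapPP' : ∫ y, (∫ x, k x y ∂P) ∂P' = ∫ x, (∫ y, k x y ∂P') ∂P := by
    have h := integral_integral_swap (μ := P') (ν := P) (f := fun y x => k x y)
      (by exact cont_integrable (hk_cont.comp (continuous_snd.prodMk continuous_fst)) _)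
    exact h
  have hswapP'P' : ∫ y, (∫ x, k x y ∂P') ∂P' = ∫ x, (∫ y, k x y ∂P') ∂P' := by
    have h := integral_integral_swap (μ := P') (ν := P') (f := fun y x => k x y)
      (by exact cont_integrable (hk_cont.comp (continuous_snd.prodMk continuous_fst)) _)
    exact h
  have hint : ∀ (R : Measure K), IsProbabilityMeasure R →
      (∫ y, kernelScore k R y ∂P')
        = (∫ x, (∫ x', k x x' ∂ R) ∂ R) - 2 * ∫ y, (∫ x, k x y ∂ R) ∂P' := by
    intro R hR
    simp only [kernelScore]
    rw [integral_sub (integrable_const _)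
      ((cont_integrable (integral_k_continuous k hk_cont hC R) P').const_mul 2),
      integral_const, probReal_univ, one_smul, integral_const_mul]
  rw [hint P inferInstance, hint P' inferInstance, hswapPP', hswapP'P', mmdSq]
  ring

lemma abs_integral_le (P : Measure K) [IsProbabilityMeasure P] {f : K → ℝ} {C : ℝ}
    (h : ∀ x, |f x| ≤ C) : |∫ x, f x ∂P| ≤ C := by
  have := norm_integral_le_of_norm_le_const (μ := P) (f := f) (C := C)
    (Filter.Eventually.of_forall fun x => by simpa [Real.norm_eq_abs] using h x)
  simpa [Real.norm_eq_abs, measure_univ] using this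

variable {Y : Type*} [MeasurableSpace Y]

lemma sm_m (k : K → K → ℝ) (hk_cont : Continuous fun p : K × K => k p.1 p.2)
    (ν : Kernel Y K) [IsMarkovKernel ν] :
    StronglyMeasurable fun p : Y × K => ∫ x', k x' p.2 ∂(ν p.1) := by
  have hf : StronglyMeasurable fun q : (Y × K) × K => k q.2 q.1.2 :=
    hk_cont.stronglyMeasurable.comp_measurable (measurable_snd.prodMk measurable_fst.snd)
  have h := hf.integral_kernel_prod_right' (κ := ν.comap Prod.fst measurable_fst)
  simpa [Kernel.comap_apply] using h

lemma sm_c (k : K → K → ℝ) (hk_cont : Continuous fun p : K × K => k p.1 p.2)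
    (ν : Kernel Y K) [IsMarkovKernel ν] :
    StronglyMeasurable fun x : Y => ∫ x', (∫ z, k x' z ∂(ν x)) ∂(ν x) := by
  have hf : StronglyMeasurable fun q : Y × (K × K) => k q.2.1 q.2.2 :=
    hk_cont.stronglyMeasurable.comp_measurable measurable_snd
  have h := hf.integral_kernel_prod_right' (κ := ν ×ₖ ν)
  have heq : ∀ x : Y, (∫ p : K × K, k p.1 p.2 ∂((ν ×ₖ ν) x))
      = ∫ x', (∫ z, k x' z ∂(ν x)) ∂(ν x) := by
    intro x
    rw [Kernel.prod_apply]
    exact integral_prod _ (cont_integrable hk_cont _)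
  simp only [heq] at h
  exact h

lemma sm_score (k : K → K → ℝ) (hk_cont : Continuous fun p : K × K => k p.1 p.2)
    (ν : Kernel Y K) [IsMarkovKernel ν] :
    StronglyMeasurable fun p : Y × K => kernelScore k (ν p.1) p.2 := by
  simp only [kernelScore]
  exact ((sm_c k hk_cont ν).comp_measurable measurable_fst).sub
    ((sm_m k hk_cont ν).const_mul 2)

lemma sm_g (k : K → K → ℝ) (hk_cont : Continuous fun p : K × K => k p.1 p.2)
    (ν κstar : Kernel Y K) [IsMarkovKernel ν] [IsMarkovKernel κstar] :
    StronglyMeasurable fun x : Y => ∫ y, kernelScore k (ν x) y ∂(κstar x) :=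
  (sm_score k hk_cont ν).integral_kernel_prod_right' (κ := κstar)

lemma score_bound (k : K → K → ℝ) {C : ℝ} (hC : ∀ x z, |k x z| ≤ C)
    (P : Measure K) [IsProbabilityMeasure P] (y : K) :
    |kernelScore k P y| ≤ 3 * C := by
  have h1 : |∫ x, (∫ x', k x x' ∂P) ∂P| ≤ C :=
    abs_integral_le P fun x => abs_integral_le P fun z => hC x z
  have h2 : |∫ x, k x y ∂P| ≤ C := abs_integral_le P fun x => hC x y
  calc |kernelScore k P y| ≤ |∫ x, (∫ x', k x x' ∂P) ∂P| + 2 * |∫ x, k x y ∂P| := by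
        rw [kernelScore]
        calc |(∫ x, (∫ x', k x x' ∂P) ∂P) - 2 * ∫ x, k x y ∂P|
            ≤ |∫ x, (∫ x', k x x' ∂P) ∂P| + |2 * ∫ x, k x y ∂P| := abs_sub _ _
          _ = _ := by rw [abs_mul]; norm_num
    _ ≤ 3 * C := by linarith

end helpers

theorem conditional_kernelScore_strictly_proper
    {K : Type*} [MetricSpace K] [CompactSpace K] [MeasurableSpace K] [BorelSpace K]
    (k : K → K → ℝ) (hk_cont : Continuous fun p : K × K => k p.1 p.2)
    (hk_symm : ∀ x y, k x y = k y x)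
    (hk_psd : ∀ (n : ℕ) (x : Fin n → K) (c : Fin n → ℝ),
      0 ≤ ∑ i, ∑ j, c i * c j * k (x i) (x j))
    (hk_char : ∀ (P Q : Measure K), IsProbabilityMeasure P → IsProbabilityMeasure Q →
      mmdSq k P Q = 0 → P = Q)
    {Y : Type*} [MeasurableSpace Y] (Q : Measure Y) [IsProbabilityMeasure Q]
    (κ κstar : Kernel Y K) [IsMarkovKernel κ] [IsMarkovKernel κstar] :
    (∫ x, (∫ y, kernelScore k (κstar x) y ∂(κstar x)) ∂Q)
        ≤ (∫ x, (∫ y, kernelScore k (κ x) y ∂(κstar x)) ∂Q) ∧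
      ((∫ x, (∫ y, kernelScore k (κstar x) y ∂(κstar x)) ∂Q)
          = (∫ x, (∫ y, kernelScore k (κ x) y ∂(κstar x)) ∂Q)
        ↔ ∀ᵐ x ∂Q, κ x = κstar x) := by
  classical
  -- bound on k
  obtain ⟨C₀, hC₀⟩ := IsCompact.exists_bound_of_continuousOn
    (isCompact_univ (X := K × K)) hk_cont.continuousOn
  set C : ℝ := max C₀ 0 with hCdef
  have hC : ∀ x z : K, |k x z| ≤ C := fun x z =>
    le_trans (by simpa [Real.norm_eq_abs] using hC₀ (x, z) (mem_univ _)) (le_max_left _ _)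
  have hC0 : 0 ≤ C := le_max_right _ _
  set g : Y → ℝ := fun x => ∫ y, kernelScore k (κ x) y ∂(κstar x) with hgdef
  set h : Y → ℝ := fun x => ∫ y, kernelScore k (κstar x) y ∂(κstar x) with hhdef
  have hdiff : ∀ x, g x - h x = mmdSq k (κ x) (κstar x) := fun x =>
    score_diff k hk_cont hC (κ x) (κstar x)
  have hF_nonneg : ∀ x, 0 ≤ mmdSq k (κ x) (κstar x) := fun x =>
    mmdSq_nonneg k hk_cont hk_symm hk_psd (κ x) (κstar x)
  have hg_int : Integrable g Q := by
    refine ⟨(sm_g k hk_cont κ κstar).aestronglyMeasurable, ?_⟩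
    apply HasFiniteIntegral.of_bounded (C := 3 * C)
    exact Filter.Eventually.of_forall fun x => by
      simpa [Real.norm_eq_abs, hgdef] using
        abs_integral_le (κstar x) (fun y => score_bound k hC (κ x) y)
  have hh_int : Integrable h Q := by
    refine ⟨(sm_g k hk_cont κstar κstar).aestronglyMeasurable, ?_⟩
    apply HasFiniteIntegral.of_bounded (C := 3 * C)
    exact Filter.Eventually.of_forall fun x => by
      simpa [Real.norm_eq_abs, hhdef] using
        abs_integral_le (κstar x) (fun y => score_bound k hC (κstar x) y)
  have hle : ∀ x, h x ≤ g x := fun x => by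
    have := hF_nonneg x; have := hdiff x; linarith
  refine ⟨integral_mono hh_int hg_int hle, ?_, ?_⟩
  · intro heq
    have hz : ∫ x, (g x - h x) ∂Q = 0 := by
      rw [integral_sub hg_int hh_int, ← heq, sub_self]
    have h0 := (integral_eq_zero_iff_of_nonneg
      (fun x => by have := hle x; simp [Pi.le_def]; linarith) (hg_int.sub hh_int)).1 hz
    have h0' : ∀ᵐ x ∂Q, g x - h x = 0 := h0
    filter_upwards [h0'] with x hx
    exact hk_char (κ x) (κstar x) inferInstance inferInstance (by rw [← hdiff x, hx])
  · intro hae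
    have : ∀ᵐ x ∂Q, h x = g x := by
      filter_upwards [hae] with x hx
      simp only [hgdef, hhdef, hx]
    exact integral_congr_ae this
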